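/- Coverage partition at the end of preprocessing: upon termination of the greedy root-path algorithm from start state s with goal set G, the returned pair (Ψ, B) satisfies: the union of the goal sets G_i associated with the root paths in Ψ is disjoint from B, every goal in ⋃G_i is reachable from s, every goal in B is unreachable from s, and (⋃ G_i) ∪ B = G. -/
import Mathlib


/-- Coverage partition at the end of preprocessing: the greedy root-path
algorithm removes at every step a nonempty subset of the remaining goals,
tagged either as covered (all its goals are reachable) or unreachable (its
goals are unreachable).  Upon termination the covered goals `C` and the
unreachable goals `B` are disjoint, every goal in `C` is reachable, every goal
in `B` is unreachable, and `C ∪ B = G`. -/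
theorem preprocess_partition {α : Type*} [DecidableEq α] (G : Finset α)
    (reachable : α → Prop) (k : ℕ) (U Sstep : ℕ → Finset α) (cov : ℕ → Bool)
    (h0 : U 0 = G) (hend : U k = ∅)
    (hsub : ∀ i < k, Sstep i ⊆ U i) (hne : ∀ i < k, (Sstep i).Nonempty)
    (hstep : ∀ i < k, U (i + 1) = U i \ Sstep i)
    (hcov : ∀ i < k, cov i = true → ∀ g ∈ Sstep i, reachable g)
    (hunr : ∀ i < k, cov i = false → ∀ g ∈ Sstep i, ¬ reachable g) :
    Disjoint ((Finset.range k).biUnion fun i => if cov i then Sstep i else ∅)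
        ((Finset.range k).biUnion fun i => if cov i then ∅ else Sstep i) ∧
      (∀ g ∈ (Finset.range k).biUnion fun i => if cov i then Sstep i else ∅,
        reachable g) ∧
      (∀ g ∈ (Finset.range k).biUnion fun i => if cov i then ∅ else Sstep i,
        ¬ reachable g) ∧
      ((Finset.range k).biUnion fun i => if cov i then Sstep i else ∅) ∪
        ((Finset.range k).biUnion fun i => if cov i then ∅ else Sstep i) = G := by
  have hreach : ∀ g ∈ (Finset.range k).biUnion fun i => if cov i then Sstep i else ∅,
      reachable g := by
    intro g hg
    simp only [Finset.mem_biUnion, Finset.mem_range] at hg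
    obtain ⟨i, hi, hgi⟩ := hg
    by_cases hc : cov i
    · simp [hc] at hgi
      exact hcov i hi hc g hgi
    · simp [hc] at hgi
  have hunreach : ∀ g ∈ (Finset.range k).biUnion fun i => if cov i then ∅ else Sstep i,
      ¬ reachable g := by
    intro g hg
    simp only [Finset.mem_biUnion, Finset.mem_range] at hg
    obtain ⟨i, hi, hgi⟩ := hg
    by_cases hc : cov i
    · simp [hc] at hgi
    · simp [hc] at hgi
      exact hunr i hi (by simpa using hc) g hgi
  refine ⟨?_, hreach, hunreach, ?_⟩
  · rw [Finset.disjoint_left]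
    intro g hg hg'
    exact hunreach g hg' (hreach g hg)
  · have key : ∀ i ≤ k, (Finset.range i).biUnion Sstep ∪ U i = G := by
      intro i hi
      induction i with
      | zero => simpa using h0
      | succ n ih =>
        have hn : n < k := hi
        have hmerge : Sstep n ∪ (Finset.range n).biUnion Sstep ∪ U n \ Sstep n =
            (Finset.range n).biUnion Sstep ∪ U n := by
          ext g
          have hg := @hsub n hn g
          simp only [Finset.mem_union, Finset.mem_sdiff]
          tauto
        rw [Finset.range_add_one, Finset.biUnion_insert, hstep n hn, hmerge, ih hn.le]
    have hall : (Finset.range k).biUnion Sstep = G := by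
      have := key k le_rfl
      rwa [hend, Finset.union_empty] at this
    rw [← hall]
    ext g
    simp only [Finset.mem_union, Finset.mem_biUnion, Finset.mem_range]
    constructor
    · rintro (⟨i, hi, hgi⟩ | ⟨i, hi, hgi⟩) <;>
        [skip; skip] <;>
        · refine ⟨i, hi, ?_⟩
          by_cases hc : cov i <;> simp [hc] at hgi ⊢ <;> exact hgi
    · rintro ⟨i, hi, hgi⟩
      by_cases hc : cov i
      · exact Or.inl ⟨i, hi, by simp [hc, hgi]⟩
      · exact Or.inr ⟨i, hi, by simp [hc, hgi]⟩
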